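/- arXiv:1709.07966 — 3 statements merged into one kernel-verified Lean document; each statement's English description precedes it below -/
import Mathlib

section
/- Every polynomial p ∈ ℝ[x_1,...,x_n] that is nonnegative on all points of {0,1}^n is a sum of squares of polynomials modulo the ideal I_01; i.e., there exist polynomials q_1,...,q_r such that p - ∑_k q_k² ∈ I_01. -/
/-!
Modulo the relations `x_i² = x_i`, the vertex indicators `e_b = ∏_i (x_i or 1 - x_i)`, `b ∈ {0,1}ⁿ`,
sum to `1`, are idempotent, and satisfy `x_i e_b ≡ b_i e_b`. Hence `f e_b ≡ f(b) e_b` for every `f`,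
so `f = ∑_b f e_b ≡ ∑_b f(b) e_b`; when `f ≥ 0` on the cube this is `∑_b (√f(b) e_b)²`.
-/

open MvPolynomial Finset

noncomputable def I01 (n : ℕ) : Ideal (MvPolynomial (Fin n) ℝ) :=
  Ideal.span (Set.range fun i : Fin n => X i ^ 2 - X i)

variable {σ R : Type*} [CommRing R]

noncomputable def booleanIdeal (σ R : Type*) [CommRing R] : Ideal (MvPolynomial σ R) :=
  Ideal.span (Set.range fun i : σ => X i ^ 2 - X i)

theorem I01_eq_booleanIdeal (n : ℕ) : I01 n = booleanIdeal (Fin n) ℝ := rfl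

theorem X_sq_sub_X_mem_booleanIdeal (i : σ) :
    (X i ^ 2 - X i : MvPolynomial σ R) ∈ booleanIdeal σ R :=
  Ideal.subset_span ⟨i, rfl⟩

def cubePoint (b : σ → Bool) : σ → R := fun i => if b i then 1 else 0

theorem cubePoint_eq_zero_or_eq_one (b : σ → Bool) (i : σ) :
    cubePoint (R := R) b i = 0 ∨ cubePoint (R := R) b i = 1 := by
  by_cases h : b i <;> simp [cubePoint, h]

noncomputable def cubeIndicator [Fintype σ] (b : σ → Bool) : MvPolynomial σ R :=
  ∏ i, if b i then X i else 1 - X i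

variable [Fintype σ]

theorem sum_cubeIndicator [DecidableEq σ] :
    ∑ b : σ → Bool, (cubeIndicator b : MvPolynomial σ R) = 1 := by
  have h := Fintype.prod_sum fun (i : σ) (c : Bool) => (if c then X i else 1 - X i : MvPolynomial σ R)
  simp only [Fintype.sum_bool, if_true, Bool.false_eq_true, if_false, add_sub_cancel,
    prod_const_one] at h
  exact h.symm

theorem eval_cubePoint_cubeIndicator (b : σ → Bool) :
    eval (cubePoint b) (cubeIndicator b : MvPolynomial σ R) = 1 := by
  simp only [cubeIndicator, map_prod]
  exact prod_eq_one fun i _ => by by_cases h : b i <;> simp [cubePoint, h]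

theorem X_mul_cubeIndicator_sub_mem_booleanIdeal (b : σ → Bool) (i : σ) :
    X i * cubeIndicator b - C (cubePoint b i) * cubeIndicator b ∈ booleanIdeal σ R := by
  classical
  set rest : MvPolynomial σ R := ∏ j ∈ univ.erase i, if b j then X j else 1 - X j
  have hsplit : cubeIndicator b = (if b i then X i else 1 - X i) * rest :=
    (mul_prod_erase univ _ (mem_univ i)).symm
  have hfactor : X i * (if b i then X i else 1 - X i) - C (cubePoint b i) *
      (if b i then X i else 1 - X i) ∈ booleanIdeal σ R := by
    have hX := X_sq_sub_X_mem_booleanIdeal (R := R) i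
    by_cases h : b i
    · simpa [cubePoint, h, sq] using hX
    · simpa [cubePoint, h, sq, mul_sub] using neg_mem hX
  rw [hsplit, ← mul_assoc, ← mul_assoc, ← sub_mul]
  exact Ideal.mul_mem_right _ _ hfactor

theorem mul_cubeIndicator_sub_mem_booleanIdeal (b : σ → Bool) (f : MvPolynomial σ R) :
    f * cubeIndicator b - C (eval (cubePoint b) f) * cubeIndicator b ∈ booleanIdeal σ R := by
  induction f using MvPolynomial.induction_on with
  | C a => simp
  | add f g hf hg =>
    simpa only [map_add, add_mul, add_sub_add_comm] using add_mem hf hg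
  | mul_X f i hf =>
    have hX := X_mul_cubeIndicator_sub_mem_booleanIdeal (R := R) b i
    have hsplit : f * X i * cubeIndicator b - C (eval (cubePoint b) (f * X i)) * cubeIndicator b =
        X i * (f * cubeIndicator b - C (eval (cubePoint b) f) * cubeIndicator b) +
          C (eval (cubePoint b) f) * (X i * cubeIndicator b - C (cubePoint b i) * cubeIndicator b) := by
      simp only [map_mul, eval_X]
      ring
    rw [hsplit]
    exact add_mem (Ideal.mul_mem_left _ _ hf) (Ideal.mul_mem_left _ _ hX)

theorem sub_sum_eval_mul_cubeIndicator_mem_booleanIdeal [DecidableEq σ] (f : MvPolynomial σ R) :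
    f - ∑ b, C (eval (cubePoint b) f) * cubeIndicator b ∈ booleanIdeal σ R := by
  have hf : f = ∑ b : σ → Bool, f * cubeIndicator b := by
    rw [← mul_sum, sum_cubeIndicator, mul_one]
  nth_rw 1 [hf]
  rw [← sum_sub_distrib]
  exact sum_mem fun b _ => mul_cubeIndicator_sub_mem_booleanIdeal b f

theorem cubeIndicator_sq_sub_self_mem_booleanIdeal (b : σ → Bool) :
    (cubeIndicator b : MvPolynomial σ R) ^ 2 - cubeIndicator b ∈ booleanIdeal σ R := by
  simpa [sq, eval_cubePoint_cubeIndicator] using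
    mul_cubeIndicator_sub_mem_booleanIdeal b (cubeIndicator b : MvPolynomial σ R)

theorem sub_sum_sq_mem_booleanIdeal [DecidableEq σ] (f : MvPolynomial σ R) (s : (σ → Bool) → R)
    (hs : ∀ b, s b ^ 2 = eval (cubePoint b) f) :
    f - ∑ b, (C (s b) * cubeIndicator b) ^ 2 ∈ booleanIdeal σ R := by
  have hsq : ∀ b, (C (s b) * cubeIndicator b) ^ 2 = C (eval (cubePoint b) f) * cubeIndicator b +
      C (eval (cubePoint b) f) * (cubeIndicator b ^ 2 - cubeIndicator b) := by
    intro b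
    rw [← hs, map_pow]
    ring
  rw [sum_congr rfl fun b _ => hsq b, sum_add_distrib, ← sub_sub]
  exact sub_mem (sub_sum_eval_mul_cubeIndicator_mem_booleanIdeal f)
    (sum_mem fun b _ => Ideal.mul_mem_left _ _ (cubeIndicator_sq_sub_self_mem_booleanIdeal b))

theorem nonneg_on_cube_is_sos_mod_I01 (n : ℕ) (p : MvPolynomial (Fin n) ℝ)
    (hp : ∀ z : Fin n → ℝ, (∀ i, z i = 0 ∨ z i = 1) → 0 ≤ eval z p) :
    ∃ (r : ℕ) (q : Fin r → MvPolynomial (Fin n) ℝ),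
      p - ∑ k, (q k) ^ 2 ∈ I01 n := by
  set s : (Fin n → Bool) → ℝ := fun b => √(eval (cubePoint b) p)
  have hs (b : Fin n → Bool) : s b ^ 2 = eval (cubePoint b) p :=
    Real.sq_sqrt (hp _ (cubePoint_eq_zero_or_eq_one b))
  let vertexEquiv := Fintype.equivFin (Fin n → Bool)
  refine ⟨_, fun k => C (s (vertexEquiv.symm k)) * cubeIndicator (vertexEquiv.symm k), ?_⟩
  rw [vertexEquiv.symm.sum_comp fun b => (C (s b) * cubeIndicator b) ^ 2, I01_eq_booleanIdeal]
  exact sub_sum_sq_mem_booleanIdeal p s hs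
end

section
/- (Bienstock–Zuckerberg structural lemma for set cover.) Let A be a 0/1 m×n matrix with rows having supports A_1,...,A_m, let F_A = {x ∈ {0,1}^n : Ax ≥ e}, and suppose a^T x - a_0 ≥ 0 is valid for F_A with a ≥ 0 of pitch π. Then there exists a set C of at most π row indices such that: (i) A_i ⊆ supp(a) for all i ∈ C; (ii) with V := ∪_{i≠j∈C} (A_i ∩ A_j), the inequality (a^T x - a_0) restricted by setting x_j = 0 for j ∈ V is valid for the fractional polytope F_C := {x ∈ [0,1]^n : ∑_{j ∈ A_i \ V} x_j ≥ 1 for all i ∈ C}; and (iii) F_A restricted by x_j = 0 for all j ∈ V is nonempty. -/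
/-!
Write `V` for the set of columns lying in two rows of a family `C`, and call `A i \ V` the petal
of the row `i ∈ C`. The petals are disjoint, so (ii) holds as soon as the minima of `a` over
the petals sum to at least `a₀`.

Such a family, with all its rows inside `supp(a)` and with a cover avoiding `V`, is built by
induction on the columns. Let `u` be a column of largest weight (positive when `a₀ > 0`). If
`{u}` is a row, every cover may be assumed to contain `u`: drop `u` with the rows through it,
lower `a₀` by `a u`, and add the row `{u}` to the family found for the rest. Otherwise delete `u`
from every row; covers of the shrunken rows still cover, and putting the heaviest column `u`
back into the rows of the family found recursively changes no petal minimum.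

Finally, any `π` rows of the family already suffice: the minima of their petals are `π`
distinct columns of `supp(a)`, whose total weight is at least `a₀` by the choice of `π`.
-/

open Finset

namespace SetCover

variable {ι α : Type*} [DecidableEq α]

def Covers (A : ι → Finset α) (I : Finset ι) (x : Finset α) : Prop :=
  ∀ i ∈ I, (A i ∩ x).Nonempty

section covers

variable {A : ι → Finset α} {I : Finset ι} {u : α} {x : Finset α}

theorem Covers.mono {B : ι → Finset α} (h : Covers B I x) (hBA : ∀ i ∈ I, B i ⊆ A i) :
    Covers A I x :=
  fun i hi => (h i hi).mono (inter_subset_inter_right (hBA i hi))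

theorem Covers.insert (h : Covers A (I.filter fun k => u ∉ A k) x) : Covers A I (insert u x) := by
  intro k hk
  by_cases huk : u ∈ A k
  · exact ⟨u, mem_inter.mpr ⟨huk, mem_insert_self u x⟩⟩
  · exact (h k (mem_filter.mpr ⟨hk, huk⟩)).mono (inter_subset_inter_left (subset_insert u x))

theorem Covers.erase (h : Covers (fun i => (A i).erase u) I x) : Covers A I (x.erase u) := by
  intro i hi
  obtain ⟨j, hj⟩ := h i hi
  obtain ⟨hjA, hjx⟩ := mem_inter.mp hj
  exact ⟨j, mem_inter.mpr ⟨mem_of_mem_erase hjA, mem_erase.mpr ⟨ne_of_mem_erase hjA, hjx⟩⟩⟩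

theorem one_le_sum_indicator {s x : Finset α} (h : (s ∩ x).Nonempty) :
    (1 : ℝ) ≤ ∑ j ∈ s, if j ∈ x then 1 else 0 := by
  rw [sum_boole, filter_mem_eq_inter]
  exact_mod_cast h.card_pos

end covers

variable [DecidableEq ι]

def overlap (A : ι → Finset α) (C : Finset ι) : Finset α :=
  ((C ×ˢ C).filter fun p => p.1 ≠ p.2).biUnion fun p => A p.1 ∩ A p.2

def petal (A : ι → Finset α) (C : Finset ι) (i : ι) : Finset α :=
  A i \ overlap A C

def PetalBound (a : α → ℝ) (a₀ : ℝ) (A : ι → Finset α) (C : Finset ι) : Prop :=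
  ∃ μ : ι → ℝ, (∀ i ∈ C, IsLeast (a '' petal A C i) (μ i)) ∧ a₀ ≤ ∑ i ∈ C, μ i

def HasPetalCertificate (a : α → ℝ) (a₀ : ℝ) (A : ι → Finset α) (I : Finset ι) : Prop :=
  ∃ C ⊆ I, (∀ i ∈ C, ∀ j ∈ A i, 0 < a j) ∧ PetalBound a a₀ A C ∧
    ∃ x, Covers A I x ∧ Disjoint x (overlap A C)

section overlap

variable {A : ι → Finset α} {C D : Finset ι} {j u : α}

theorem mem_overlap :
    j ∈ overlap A C ↔ ∃ i ∈ C, ∃ k ∈ C, i ≠ k ∧ j ∈ A i ∧ j ∈ A k := by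
  simp only [overlap, mem_biUnion, mem_filter, mem_product, mem_inter, Prod.exists]
  grind

theorem notMem_overlap (hu : ∀ k ∈ C, u ∉ A k) : u ∉ overlap A C := fun huV => by
  obtain ⟨k, hk, -, -, -, huk, -⟩ := mem_overlap.mp huV
  exact hu k hk huk

theorem overlap_mono (h : C ⊆ D) : overlap A C ⊆ overlap A D := by
  intro j hj
  obtain ⟨i, hi, k, hk, hik, hji, hjk⟩ := mem_overlap.mp hj
  exact mem_overlap.mpr ⟨i, h hi, k, h hk, hik, hji, hjk⟩

theorem overlap_erase (A : ι → Finset α) (C : Finset ι) (u : α) :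
    overlap (fun i => (A i).erase u) C = (overlap A C).erase u := by
  ext j
  simp only [mem_erase, mem_overlap]
  grind

theorem overlap_insert_of_disjoint {i : ι} (hi : ∀ k ∈ C, Disjoint (A i) (A k)) :
    overlap A (insert i C) = overlap A C := by
  refine (overlap_mono (subset_insert i C)).antisymm' fun j hj => ?_
  obtain ⟨k, hk, l, hl, hkl, hjk, hjl⟩ := mem_overlap.mp hj
  rcases mem_insert.mp hk with rfl | hkC
  · rcases mem_insert.mp hl with rfl | hlC
    · exact absurd rfl hkl
    · exact absurd hjl (disjoint_left.mp (hi l hlC) hjk)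
  rcases mem_insert.mp hl with rfl | hlC
  · exact absurd hjk (disjoint_left.mp (hi k hkC) hjl)
  exact mem_overlap.mpr ⟨k, hkC, l, hlC, hkl, hjk, hjl⟩

theorem overlap_insert_of_eq_singleton {i : ι} (hi : A i = {u}) (hu : ∀ k ∈ C, u ∉ A k) :
    overlap A (insert i C) = overlap A C :=
  overlap_insert_of_disjoint fun k hk => hi ▸ disjoint_singleton_left.mpr (hu k hk)

theorem pairwiseDisjoint_petal (A : ι → Finset α) (C : Finset ι) :
    (C : Set ι).PairwiseDisjoint (petal A C) := by
  intro i hi k hk hik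
  refine disjoint_left.mpr fun j hji hjk => (mem_sdiff.mp hji).2 ?_
  exact mem_overlap.mpr ⟨i, hi, k, hk, hik, (mem_sdiff.mp hji).1, (mem_sdiff.mp hjk).1⟩

theorem petal_anti (h : C ⊆ D) (i : ι) : petal A D i ⊆ petal A C i :=
  sdiff_subset_sdiff subset_rfl (overlap_mono h)

theorem petal_erase (A : ι → Finset α) (C : Finset ι) (u : α) (i : ι) :
    petal (fun i => (A i).erase u) C i = (petal A C i).erase u := by
  rw [petal, petal, overlap_erase, erase_sdiff_distrib]

end overlap

section petalBound

variable {a : α → ℝ} {a₀ : ℝ} {A : ι → Finset α} {C : Finset ι}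

theorem exists_isLeast_petal (hne : ∀ i ∈ C, (petal A C i).Nonempty) :
    ∃ μ : ι → ℝ, ∀ i ∈ C, IsLeast (a '' petal A C i) (μ i) := by
  have h : ∀ i, ∃ m, i ∈ C → IsLeast (a '' petal A C i) m := fun i => by
    by_cases hi : i ∈ C
    · obtain ⟨j, hj, hmin⟩ := (petal A C i).exists_min_image a (hne i hi)
      exact ⟨a j, fun _ => ⟨⟨j, hj, rfl⟩, by rintro _ ⟨k, hk, rfl⟩; exact hmin k hk⟩⟩
    · exact ⟨0, fun h => absurd h hi⟩
  choose μ hμ using h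
  exact ⟨μ, hμ⟩

theorem PetalBound.petal_nonempty (h : PetalBound a a₀ A C) {i : ι} (hi : i ∈ C) :
    (petal A C i).Nonempty := by
  obtain ⟨μ, hμ, -⟩ := h
  obtain ⟨j, hj, -⟩ := (hμ i hi).1
  exact ⟨j, hj⟩

theorem petalBound_empty (h : a₀ ≤ 0) : PetalBound a a₀ A ∅ :=
  ⟨0, by simp, by simpa using h⟩

/-- Any `π` rows with nonempty petals certify the bound, because their petal minima are `π`
distinct columns of `supp`. -/
theorem petalBound_of_le_card (ha : ∀ j, 0 ≤ a j) {supp : Finset α} {π : ℕ}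
    (hpitch : ∀ S ⊆ supp, S.card = π → a₀ ≤ ∑ j ∈ S, a j) (hsupp : ∀ i ∈ C, A i ⊆ supp)
    (hne : ∀ i ∈ C, (petal A C i).Nonempty) (hπ : π ≤ C.card) : PetalBound a a₀ A C := by
  obtain ⟨μ, hμ⟩ := exists_isLeast_petal (a := a) hne
  choose g hg hgμ using fun i : C => (hμ i i.2).1
  have hg_inj : Function.Injective g := fun i k hik => Subtype.ext <|
    (pairwiseDisjoint_petal A C).elim i.2 k.2 (not_disjoint_iff.mpr ⟨g i, hg i, hik ▸ hg k⟩)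
  have hT : (univ.image g).card = C.card := by
    rw [card_image_of_injective _ hg_inj, card_univ, Fintype.card_coe]
  obtain ⟨S, hST, hS⟩ := exists_subset_card_eq (hT ▸ hπ : π ≤ (univ.image g).card)
  have hTsupp : univ.image g ⊆ supp := by
    simp only [image_subset_iff, mem_univ, forall_const]
    exact fun i => hsupp i i.2 (mem_sdiff.mp (hg i)).1
  refine ⟨μ, hμ, ?_⟩
  calc a₀ ≤ ∑ j ∈ S, a j := hpitch S (hST.trans hTsupp) hS
    _ ≤ ∑ j ∈ univ.image g, a j := sum_le_sum_of_subset_of_nonneg hST fun j _ _ => ha j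
    _ = ∑ i ∈ C, μ i := by
      rw [sum_image fun i _ k _ h => hg_inj h, ← sum_coe_sort C μ]
      exact sum_congr rfl fun i _ => hgμ i

theorem PetalBound.exists_subset_card_le (h : PetalBound a a₀ A C) (ha : ∀ j, 0 ≤ a j)
    {supp : Finset α} {π : ℕ} (hpitch : ∀ S ⊆ supp, S.card = π → a₀ ≤ ∑ j ∈ S, a j)
    (hsupp : ∀ i ∈ C, A i ⊆ supp) : ∃ D ⊆ C, D.card ≤ π ∧ PetalBound a a₀ A D := by
  by_cases hC : C.card ≤ π
  · exact ⟨C, subset_rfl, hC, h⟩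
  obtain ⟨D, hDC, hD⟩ := exists_subset_card_eq (not_le.mp hC).le
  refine ⟨D, hDC, hD.le, petalBound_of_le_card ha hpitch (fun i hi => hsupp i (hDC hi))
    (fun i hi => (h.petal_nonempty (hDC hi)).mono (petal_anti hDC i)) hD.ge⟩

/-- The petals are disjoint, so a point covering each petal once pays at
least the petal minimum on each of them. -/
theorem PetalBound.le_sum_mul [Fintype α] (h : PetalBound a a₀ A C) (ha : ∀ j, 0 ≤ a j)
    {x : α → ℝ} (hx : ∀ j, 0 ≤ x j) (hcov : ∀ i ∈ C, 1 ≤ ∑ j ∈ petal A C i, x j) :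
    a₀ ≤ ∑ j ∈ univ \ overlap A C, a j * x j := by
  obtain ⟨μ, hμ, hsum⟩ := h
  have hpetal : ∀ i ∈ C, μ i ≤ ∑ j ∈ petal A C i, a j * x j := fun i hi => by
    obtain ⟨j, -, hjμ⟩ := (hμ i hi).1
    calc μ i ≤ μ i * ∑ k ∈ petal A C i, x k := le_mul_of_one_le_right (hjμ ▸ ha j) (hcov i hi)
      _ = ∑ k ∈ petal A C i, μ i * x k := mul_sum _ _ _
      _ ≤ ∑ k ∈ petal A C i, a k * x k := sum_le_sum fun k hk =>
          mul_le_mul_of_nonneg_right ((hμ i hi).2 ⟨k, hk, rfl⟩) (hx k)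
  calc a₀ ≤ ∑ i ∈ C, μ i := hsum
    _ ≤ ∑ i ∈ C, ∑ j ∈ petal A C i, a j * x j := sum_le_sum hpetal
    _ = ∑ j ∈ C.biUnion (petal A C), a j * x j := (sum_biUnion (pairwiseDisjoint_petal A C)).symm
    _ ≤ ∑ j ∈ univ \ overlap A C, a j * x j := by
      refine sum_le_sum_of_subset_of_nonneg ?_ fun j _ _ => mul_nonneg (ha j) (hx j)
      intro j hj
      obtain ⟨i, -, hj⟩ := mem_biUnion.mp hj
      exact mem_sdiff.mpr ⟨mem_univ j, (mem_sdiff.mp hj).2⟩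

theorem PetalBound.insert_singleton {u : α} {i : ι} (h : PetalBound a (a₀ - a u) A C)
    (hi : A i = {u}) (hu : ∀ k ∈ C, u ∉ A k) : PetalBound a a₀ A (insert i C) := by
  obtain ⟨μ, hμ, hsum⟩ := h
  have hiC : i ∉ C := fun h => hu i h (hi ▸ mem_singleton_self u)
  have hpetal : ∀ k, petal A (insert i C) k = petal A C k := fun k => by
    simp only [petal, overlap_insert_of_eq_singleton hi hu]
  have hpetal_i : petal A C i = {u} := by
    rw [petal, hi]
    exact sdiff_eq_self_of_disjoint (disjoint_singleton_left.mpr (notMem_overlap hu))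
  refine ⟨Function.update μ i (a u), fun k hk => ?_, ?_⟩
  · rw [hpetal]
    rcases mem_insert.mp hk with rfl | hkC
    · simp [hpetal_i]
    · rw [Function.update_of_ne (ne_of_mem_of_not_mem hkC hiC)]
      exact hμ k hkC
  · rw [sum_insert hiC, Function.update_self, sum_update_of_notMem hiC]
    linarith

theorem PetalBound.of_erase {u : α} (h : PetalBound a a₀ (fun i => (A i).erase u) C)
    (hmax : ∀ i ∈ C, ∀ j ∈ A i, a j ≤ a u) : PetalBound a a₀ A C := by
  obtain ⟨μ, hμ, hsum⟩ := h
  refine ⟨μ, fun i hi => ?_, hsum⟩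
  have hμi := hμ i hi
  rw [petal_erase] at hμi
  obtain ⟨⟨j, hj, hjμ⟩, hlow⟩ := hμi
  refine ⟨⟨j, mem_of_mem_erase hj, hjμ⟩, ?_⟩
  rintro _ ⟨k, hk, rfl⟩
  by_cases hku : k = u
  · exact hjμ ▸ hku ▸ hmax i hi j (mem_sdiff.mp (mem_of_mem_erase hj)).1
  · exact hlow ⟨k, mem_erase.mpr ⟨hku, hk⟩, rfl⟩

end petalBound

section certificate

variable {a : α → ℝ} {a₀ : ℝ} {A : ι → Finset α} {I : Finset ι} {u : α} {x : Finset α}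

theorem hasPetalCertificate_of_singleton {i : ι} (hiI : i ∈ I) (hi : A i = {u}) (hu : 0 < a u)
    (h : HasPetalCertificate a (a₀ - a u) A (I.filter fun k => u ∉ A k)) :
    HasPetalCertificate a a₀ A I := by
  obtain ⟨C, hCI, hpos, hbound, x, hcov, hdisj⟩ := h
  have huC : ∀ k ∈ C, u ∉ A k := fun k hk => (mem_filter.mp (hCI hk)).2
  refine ⟨insert i C, insert_subset hiI (hCI.trans (filter_subset _ _)), ?_,
    hbound.insert_singleton hi huC, insert u x, hcov.insert, ?_⟩
  · intro k hk j hj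
    rcases mem_insert.mp hk with rfl | hkC
    · rw [hi, mem_singleton] at hj
      exact hj ▸ hu
    · exact hpos k hkC j hj
  · rw [overlap_insert_of_eq_singleton hi huC, disjoint_insert_left]
    exact ⟨notMem_overlap huC, hdisj⟩

theorem hasPetalCertificate_of_erase (hu : 0 < a u) (hmax : ∀ i ∈ I, ∀ j ∈ A i, a j ≤ a u)
    (h : HasPetalCertificate a a₀ (fun i => (A i).erase u) I) : HasPetalCertificate a a₀ A I := by
  obtain ⟨C, hCI, hpos, hbound, x, hcov, hdisj⟩ := h
  refine ⟨C, hCI, ?_, hbound.of_erase fun i hi => hmax i (hCI hi), x.erase u, hcov.erase, ?_⟩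
  · intro i hi j hj
    by_cases hju : j = u
    · exact hju ▸ hu
    · exact hpos i hi j (mem_erase.mpr ⟨hju, hj⟩)
  · rw [overlap_erase] at hdisj
    refine disjoint_left.mpr fun j hjx hjV => disjoint_left.mp hdisj (mem_of_mem_erase hjx) ?_
    exact mem_erase.mpr ⟨ne_of_mem_erase hjx, hjV⟩

theorem sum_insert_le_add (ha : ∀ j, 0 ≤ a j) (u : α) (x : Finset α) :
    ∑ j ∈ insert u x, a j ≤ a u + ∑ j ∈ x, a j := by
  by_cases hux : u ∈ x
  · rw [insert_eq_of_mem hux]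
    exact le_add_of_nonneg_left (ha u)
  · rw [sum_insert hux]

theorem hasPetalCertificate_of_valid (ha : ∀ j, 0 ≤ a j) (G : Finset α) (I : Finset ι)
    (A : ι → Finset α) (a₀ : ℝ) (hne : ∀ i ∈ I, (A i).Nonempty) (hG : ∀ i ∈ I, A i ⊆ G)
    (hvalid : ∀ x, Covers A I x → a₀ ≤ ∑ j ∈ x, a j) : HasPetalCertificate a a₀ A I := by
  induction G using Finset.strongInduction generalizing I A a₀ with
  | H G ih =>
  have hcovG : Covers A I G := fun i hi => by rw [inter_eq_left.mpr (hG i hi)]; exact hne i hi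
  by_cases ha₀ : a₀ ≤ 0
  · exact ⟨∅, empty_subset I, by simp, petalBound_empty ha₀, G, hcovG, by simp [overlap]⟩
  have hGpos : 0 < ∑ j ∈ G, a j := (not_le.mp ha₀).trans_le (hvalid G hcovG)
  obtain ⟨u, huG, hmax⟩ := G.exists_max_image a (nonempty_of_sum_ne_zero hGpos.ne')
  have hu : 0 < a u := by
    by_contra! hu
    exact hGpos.not_ge (sum_nonpos fun j hj => (hmax j hj).trans hu)
  by_cases hsingle : ∃ i ∈ I, A i = {u}
  · obtain ⟨i, hiI, hi⟩ := hsingle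
    refine hasPetalCertificate_of_singleton hiI hi hu (ih _ (erase_ssubset huG) _ _ _
      (fun k hk => hne k (mem_filter.mp hk).1)
      (fun k hk => subset_erase.mpr ⟨hG k (mem_filter.mp hk).1, (mem_filter.mp hk).2⟩)
      fun x hx => ?_)
    linarith [hvalid _ hx.insert, sum_insert_le_add ha u x]
  · refine hasPetalCertificate_of_erase hu (fun i hi j hj => hmax j (hG i hi hj))
      (ih _ (erase_ssubset huG) _ _ _ (fun i hi => ?_) (fun i hi => erase_subset_erase u (hG i hi))
      fun x hx => hvalid x (hx.mono fun i _ => erase_subset u (A i)))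
    rw [nonempty_iff_ne_empty, Ne, erase_eq_empty_iff, not_or]
    exact ⟨(hne i hi).ne_empty, fun h => hsingle ⟨i, hi, h⟩⟩

end certificate

end SetCover

open SetCover

theorem bienstock_zuckerberg_structural_lemma_general (m n : ℕ)
    (A : Fin m → Finset (Fin n)) (hAne : ∀ i, (A i).Nonempty)
    (a : Fin n → ℝ) (ha : ∀ i, 0 ≤ a i) (a₀ : ℝ)
    (supp : Finset (Fin n)) (hsupp : supp = Finset.univ.filter fun i => 0 < a i)
    (hvalid : ∀ x : Fin n → ℝ, (∀ j, x j = 0 ∨ x j = 1) →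
      (∀ i, 1 ≤ ∑ j ∈ A i, x j) → a₀ ≤ ∑ j, a j * x j)
    (π : ℕ)
    -- the sum of the π smallest nonzero entries of `a` is at least `a₀`
    (hpitch₁ : ∀ S ⊆ supp, S.card = π → a₀ ≤ ∑ i ∈ S, a i) :
    ∃ C : Finset (Fin m), C.card ≤ π ∧ (∀ i ∈ C, A i ⊆ supp) ∧
      ∃ V : Finset (Fin n),
        V = ((C ×ˢ C).filter fun p => p.1 ≠ p.2).biUnion
              (fun p => A p.1 ∩ A p.2) ∧
        -- (ii) the restricted inequality is valid for the fractional polytope F_C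
        (∀ x : Fin n → ℝ, (∀ j, 0 ≤ x j ∧ x j ≤ 1) →
          (∀ i ∈ C, 1 ≤ ∑ j ∈ A i \ V, x j) →
          a₀ ≤ ∑ j ∈ Finset.univ \ V, a j * x j) ∧
        -- (iii) F_A with the variables of V set to zero is nonempty
        (∃ x : Fin n → ℝ, (∀ j, x j = 0 ∨ x j = 1) ∧ (∀ j ∈ V, x j = 0) ∧
          ∀ i, 1 ≤ ∑ j ∈ A i, x j) := by
  have hvalid' : ∀ x, Covers A univ x → a₀ ≤ ∑ j ∈ x, a j := fun x hx => by
    simpa [mul_ite, sum_ite_mem] using hvalid (fun j => if j ∈ x then 1 else 0)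
      (fun j => by split_ifs <;> simp) fun i => one_le_sum_indicator (hx i (mem_univ i))
  obtain ⟨C₀, -, hpos, hbound, x, hcov, hdisj⟩ := hasPetalCertificate_of_valid ha univ univ A a₀
    (fun i _ => hAne i) (fun i _ => subset_univ _) hvalid'
  have hsuppC₀ : ∀ i ∈ C₀, A i ⊆ supp := fun i hi j hj =>
    hsupp ▸ mem_filter.mpr ⟨mem_univ j, hpos i hi j hj⟩
  obtain ⟨C, hCC₀, hCπ, hC⟩ := hbound.exists_subset_card_le ha hpitch₁ hsuppC₀
  refine ⟨C, hCπ, fun i hi => hsuppC₀ i (hCC₀ hi), overlap A C, rfl,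
    fun y hy hyC => hC.le_sum_mul ha (fun j => (hy j).1) hyC, fun j => if j ∈ x then 1 else 0,
    fun j => by by_cases hjx : j ∈ x <;> simp [hjx], fun j hj => ?_,
    fun i => one_le_sum_indicator (hcov i (mem_univ i))⟩
  exact if_neg (disjoint_right.mp hdisj (overlap_mono hCC₀ hj))

theorem bienstock_zuckerberg_structural_lemma (m n : ℕ)
    (A : Fin m → Finset (Fin n)) (hAne : ∀ i, (A i).Nonempty)
    (hAmin : ∀ i j, i ≠ j → ¬ A i ⊆ A j)
    (a : Fin n → ℝ) (ha : ∀ i, 0 ≤ a i) (a₀ : ℝ)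
    (supp : Finset (Fin n)) (hsupp : supp = Finset.univ.filter fun i => 0 < a i)
    (hvalid : ∀ x : Fin n → ℝ, (∀ j, x j = 0 ∨ x j = 1) →
      (∀ i, 1 ≤ ∑ j ∈ A i, x j) → a₀ ≤ ∑ j, a j * x j)
    (π : ℕ)
    -- the sum of the π smallest nonzero entries of `a` is at least `a₀`
    (hpitch₁ : ∀ S ⊆ supp, S.card = π → a₀ ≤ ∑ i ∈ S, a i)
    -- π is minimal with this property
    (hpitch₂ : π = 0 ∨ ∃ S ⊆ supp, S.card = π - 1 ∧ ∑ i ∈ S, a i < a₀) :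
    ∃ C : Finset (Fin m), C.card ≤ π ∧ (∀ i ∈ C, A i ⊆ supp) ∧
      ∃ V : Finset (Fin n),
        V = ((C ×ˢ C).filter fun p => p.1 ≠ p.2).biUnion
              (fun p => A p.1 ∩ A p.2) ∧
        -- (ii) the restricted inequality is valid for the fractional polytope F_C
        (∀ x : Fin n → ℝ, (∀ j, 0 ≤ x j ∧ x j ≤ 1) →
          (∀ i ∈ C, 1 ≤ ∑ j ∈ A i \ V, x j) →
          a₀ ≤ ∑ j ∈ Finset.univ \ V, a j * x j) ∧
        -- (iii) F_A with the variables of V set to zero is nonempty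
        (∃ x : Fin n → ℝ, (∀ j, x j = 0 ∨ x j = 1) ∧ (∀ j ∈ V, x j = 0) ∧
          ∀ i, 1 ≤ ∑ j ∈ A i, x j) :=
  bienstock_zuckerberg_structural_lemma_general m n A hAne a ha a₀ supp hsupp hvalid π hpitch₁
end

section
/- (Restriction reduces pitch.) Let a^T x - a_0 ≥ 0 be a covering inequality with a ≥ 0 of pitch π, let J ⊆ supp(a) be nonempty, and let the restricted inequality be obtained by setting x_j = 1 for j ∈ J (i.e., new right-hand side a_0 - ∑_{j∈J} a_j, same coefficients on remaining variables). If the restricted inequality has positive right-hand side, then its pitch is at most π - |J|. -/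
open Finset

/-- The support of a coefficient vector. -/
noncomputable def supp {n : ℕ} (a : Fin n → ℝ) : Finset (Fin n) :=
  Finset.univ.filter fun i => a i ≠ 0

/-- The pitch of the covering inequality `a^T x ≥ a₀`: the minimum `p` such that
every set of `p` nonzero coefficients sums to at least `a₀` (equivalently, the
sum of the `p` smallest nonzero entries of `a` is at least `a₀`). -/
noncomputable def covPitch {n : ℕ} (a : Fin n → ℝ) (a₀ : ℝ) : ℕ :=
  sInf {p : ℕ | ∀ S ⊆ supp a, S.card = p → a₀ ≤ ∑ i ∈ S, a i}

/-!
Since `a ≥ 0`, the sets of nonzero coefficients whose sum reaches `a₀` are closed upward, so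
`J` itself (whose sum falls short) has fewer than `π` elements. A set `S` of `π - |J|` nonzero
coefficients of the restriction avoids `J`, hence `S ∪ J` has `π` elements and covers `a₀`,
i.e. `S` covers `a₀ - ∑ J`.
-/

section
variable {n : ℕ} {a : Fin n → ℝ} {a₀ : ℝ}

lemma covPitch_le {p : ℕ} (h : ∀ S ⊆ supp a, S.card = p → a₀ ≤ ∑ i ∈ S, a i) :
    covPitch a a₀ ≤ p :=
  Nat.sInf_le h

lemma le_sum_of_card_eq_covPitch {S : Finset (Fin n)} (hS : S ⊆ supp a)
    (hcard : S.card = covPitch a a₀) : a₀ ≤ ∑ i ∈ S, a i := by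
  -- `n + 1` lies in the defining set vacuously, so the infimum is attained.
  have hne : (n + 1) ∈ {p : ℕ | ∀ S ⊆ supp a, S.card = p → a₀ ≤ ∑ i ∈ S, a i} := by
    intro S _ hS
    have := S.card_le_univ
    simp only [Fintype.card_fin] at this
    omega
  exact Nat.sInf_mem ⟨n + 1, hne⟩ S hS hcard

lemma le_sum_of_covPitch_le_card (ha : ∀ i, 0 ≤ a i) {S : Finset (Fin n)} (hS : S ⊆ supp a)
    (hcard : covPitch a a₀ ≤ S.card) : a₀ ≤ ∑ i ∈ S, a i := by
  obtain ⟨T, hTS, hT⟩ := exists_subset_card_eq hcard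
  calc a₀ ≤ ∑ i ∈ T, a i := le_sum_of_card_eq_covPitch (hTS.trans hS) hT
    _ ≤ ∑ i ∈ S, a i := sum_le_sum_of_subset_of_nonneg hTS fun i _ _ => ha i

lemma card_lt_covPitch (ha : ∀ i, 0 ≤ a i) {S : Finset (Fin n)} (hS : S ⊆ supp a)
    (hsum : ∑ i ∈ S, a i < a₀) : S.card < covPitch a a₀ := by
  by_contra! h
  exact (le_sum_of_covPitch_le_card ha hS h).not_gt hsum

end

lemma supp_ite_mem_zero {n : ℕ} (a : Fin n → ℝ) (J : Finset (Fin n)) :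
    supp (fun i => if i ∈ J then 0 else a i) = supp a \ J := by
  ext i
  by_cases hi : i ∈ J <;> simp [supp, hi]

theorem restriction_reduces_pitch_general (n : ℕ) (a : Fin n → ℝ) (ha : ∀ i, 0 ≤ a i)
    (a₀ : ℝ) (J : Finset (Fin n)) (hJ : J ⊆ supp a)
    (hpos : 0 < a₀ - ∑ j ∈ J, a j) :
    covPitch (fun i => if i ∈ J then 0 else a i) (a₀ - ∑ j ∈ J, a j) + J.card ≤
      covPitch a a₀ := by
  have hJlt : J.card < covPitch a a₀ := card_lt_covPitch ha hJ (by linarith)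
  suffices covPitch (fun i => if i ∈ J then 0 else a i) (a₀ - ∑ j ∈ J, a j) ≤
      covPitch a a₀ - J.card by omega
  refine covPitch_le fun S hS hcard => ?_
  rw [supp_ite_mem_zero, subset_sdiff] at hS
  obtain ⟨hSa, hSJ⟩ := hS
  have hcover : a₀ ≤ ∑ i ∈ S ∪ J, a i :=
    le_sum_of_card_eq_covPitch (union_subset hSa hJ) (by rw [card_union_of_disjoint hSJ]; omega)
  have hrestrict : ∑ i ∈ S, (if i ∈ J then 0 else a i) = ∑ i ∈ S, a i :=
    sum_congr rfl fun i hi => if_neg (disjoint_left.mp hSJ hi)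
  rw [sum_union hSJ] at hcover
  linarith

theorem restriction_reduces_pitch (n : ℕ) (a : Fin n → ℝ) (ha : ∀ i, 0 ≤ a i)
    (a₀ : ℝ) (J : Finset (Fin n)) (hJ : J ⊆ supp a) (hJne : J.Nonempty)
    (hpos : 0 < a₀ - ∑ j ∈ J, a j) :
    covPitch (fun i => if i ∈ J then 0 else a i) (a₀ - ∑ j ∈ J, a j) + J.card ≤
      covPitch a a₀ :=
  restriction_reduces_pitch_general n a ha a₀ J hJ hpos
end
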